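/- arXiv:1712.02103 — 5 statements merged into one kernel-verified Lean document; each statement's English description precedes it below -/
import Mathlib

section
/- Let S be a finite set of jobs and S' ⊆ S. Let π and π' be two permutations (lists) of S', and let σ be a permutation of S \ S'. If C_2(π) ≤ C_2(π') and C_3(π) ≤ C_3(π'), then C_2(π ++ σ) ≤ C_2(π' ++ σ) and C_3(π ++ σ) ≤ C_3(π' ++ σ). -/
/-- Machine completion times `(C₁, C₂, C₃)` of a job sequence in a
three-machine flowshop with processing times `p i j`. -/
def flowComp (p : ℕ → Fin 3 → ℕ) (π : List ℕ) : ℕ × ℕ × ℕ :=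
  π.foldl (fun c i =>
    let c1 := c.1 + p i 0
    let c2 := max c.2.1 c1 + p i 1
    let c3 := max c.2.2 c2 + p i 2
    (c1, c2, c3)) (0, 0, 0)

/-- Completion time on machine 2. -/
def C2 (p : ℕ → Fin 3 → ℕ) (π : List ℕ) : ℕ := (flowComp p π).2.1

/-- Completion time on machine 3. -/
def C3 (p : ℕ → Fin 3 → ℕ) (π : List ℕ) : ℕ := (flowComp p π).2.2

/-- `π` is a permutation of the finite jobset `S`: it lists each element
of `S` exactly once. -/
def IsPermOf (π : List ℕ) (S : Finset ℕ) : Prop :=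
  π.Nodup ∧ ∀ x, x ∈ π ↔ x ∈ S

/-! The state after a sequence is monotone in the state it starts from (componentwise order
on `ℕ × ℕ × ℕ`), and the machine-1 coordinate of `flowComp` is the total machine-1 work, which
does not depend on the order of the jobs. So two orders of the same jobs whose `C₂` and `C₃` are
ordered give ordered states, and appending `σ` preserves that order. -/

namespace Flowshop

variable (p : ℕ → Fin 3 → ℕ)

def step (c : ℕ × ℕ × ℕ) (i : ℕ) : ℕ × ℕ × ℕ :=
  let c1 := c.1 + p i 0
  let c2 := max c.2.1 c1 + p i 1
  let c3 := max c.2.2 c2 + p i 2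
  (c1, c2, c3)

theorem flowComp_eq_foldl (π : List ℕ) : flowComp p π = π.foldl (step p) (0, 0, 0) := rfl

theorem flowComp_append (π σ : List ℕ) :
    flowComp p (π ++ σ) = σ.foldl (step p) (flowComp p π) :=
  List.foldl_append

theorem step_monotone (i : ℕ) : Monotone fun c => step p c i := by
  rintro ⟨a1, a2, a3⟩ ⟨b1, b2, b3⟩ ⟨h1, h2, h3⟩
  simp only [step, Prod.mk_le_mk]
  exact ⟨by gcongr, by gcongr, by gcongr⟩

theorem foldl_step_monotone (σ : List ℕ) : Monotone fun c => σ.foldl (step p) c :=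
  List.foldl_monotone (step_monotone p) σ

theorem fst_foldl_step (σ : List ℕ) (c : ℕ × ℕ × ℕ) :
    (σ.foldl (step p) c).1 = c.1 + (σ.map (p · 0)).sum := by
  induction σ generalizing c with
  | nil => simp
  | cons i σ ih => simp [ih, step, Nat.add_assoc]

theorem fst_flowComp (π : List ℕ) : (flowComp p π).1 = (π.map (p · 0)).sum := by
  simp [flowComp_eq_foldl, fst_foldl_step]

theorem fst_flowComp_eq_of_perm {π π' : List ℕ} (h : π.Perm π') :
    (flowComp p π).1 = (flowComp p π').1 := by
  rw [fst_flowComp, fst_flowComp, (h.map _).sum_eq]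

end Flowshop

theorem IsPermOf.perm {π π' : List ℕ} {S : Finset ℕ} (hπ : IsPermOf π S)
    (hπ' : IsPermOf π' S) : π.Perm π' :=
  (List.perm_ext_iff_of_nodup hπ.1 hπ'.1).2 fun x => (hπ.2 x).trans (hπ'.2 x).symm

open Flowshop in
theorem stmt_0_general (p : ℕ → Fin 3 → ℕ) (S' : Finset ℕ)
    (π π' σ : List ℕ) (hπ : IsPermOf π S') (hπ' : IsPermOf π' S')
    (h2 : C2 p π ≤ C2 p π') (h3 : C3 p π ≤ C3 p π') :
    C2 p (π ++ σ) ≤ C2 p (π' ++ σ) ∧ C3 p (π ++ σ) ≤ C3 p (π' ++ σ) := by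
  have h1 : (flowComp p π).1 = (flowComp p π').1 :=
    fst_flowComp_eq_of_perm p (hπ.perm hπ')
  have hle : flowComp p π ≤ flowComp p π' := ⟨h1.le, h2, h3⟩
  have key := foldl_step_monotone p σ hle
  simp only [C2, C3, flowComp_append]
  exact ⟨key.2.1, key.2.2⟩

theorem stmt_0 (p : ℕ → Fin 3 → ℕ) (S S' : Finset ℕ) (hS' : S' ⊆ S)
    (π π' σ : List ℕ) (hπ : IsPermOf π S') (hπ' : IsPermOf π' S')
    (hσ : IsPermOf σ (S \ S'))
    (h2 : C2 p π ≤ C2 p π') (h3 : C3 p π ≤ C3 p π') :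
    C2 p (π ++ σ) ≤ C2 p (π' ++ σ) ∧ C3 p (π ++ σ) ≤ C3 p (π' ++ σ) :=
  stmt_0_general p S' π π' σ hπ hπ' h2 h3
end

section
/- Let S be a finite set of jobs and S' ⊆ S. Let π and π' be two permutations of S', and let σ be a permutation of S \ S'. Suppose each job i has a nondecreasing cost function f_i and define f_max(π) as the maximum over all jobs i occurring in π of f_i(C_i(π)) (with f_max([]) = 0). If C_2(π) ≤ C_2(π'), C_3(π) ≤ C_3(π') and f_max(π) ≤ f_max(π'), then C_2(π ++ σ) ≤ C_2(π' ++ σ), C_3(π ++ σ) ≤ C_3(π' ++ σ) and f_max(π ++ σ) ≤ f_max(π' ++ σ). -/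
/-- Completion time of job `i` in the sequence `π`: `C₃` of the prefix of `π`
ending at (the first occurrence of) `i`. -/
def jobC (p : ℕ → Fin 3 → ℕ) (π : List ℕ) (i : ℕ) : ℕ :=
  C3 p (π.takeWhile (· != i) ++ [i])

/-- `f_max(π)`: the maximum over jobs `i` occurring in `π` of `f i (C_i(π))`,
with value `0` on the empty list. -/
noncomputable def fmax (p : ℕ → Fin 3 → ℕ) (f : ℕ → ℕ → ℝ) (π : List ℕ) : ℝ :=
  (π.map (fun i => f i (jobC p π i))).foldr max 0

/-! The state `(C₁, C₂, C₃)` evolves job by job through a step map that is monotone for the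
componentwise order, so a schedule that is no later on every machine stays no later after any
common continuation. Two orders of the same jobs have the same `C₁`, so the hypotheses say exactly
that the state after `π` is below the state after `π'`. Jobs of `π` keep their completion times when
`σ` is appended, and a later job `i` completes at `C₃` of the continuation up to `i`, which is
monotone in the starting state; monotonicity of `f i` then carries this over to `f_max`. -/

theorem List.takeWhile_append_of_mem_of_not {α : Type*} {q : α → Bool} {l₁ : List α} {a : α}
    (ha : a ∈ l₁) (hqa : q a = false) (l₂ : List α) :
    (l₁ ++ l₂).takeWhile q = l₁.takeWhile q := by
  induction l₁ with
  | nil => simp at ha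
  | cons x xs ih =>
    rcases List.mem_cons.1 ha with rfl | ha
    · simp [hqa]
    · cases hqx : q x <;> simp [hqx, ih ha]

theorem List.foldr_max_le {α : Type*} [LinearOrder α] {l : List α} {b M : α} (hb : b ≤ M)
    (h : ∀ a ∈ l, a ≤ M) : l.foldr max b ≤ M := by
  induction l with
  | nil => exact hb
  | cons x xs ih => simpa using ⟨h x (by simp), ih fun a ha => h a (by simp [ha])⟩

theorem List.le_foldr_max_init {α : Type*} [LinearOrder α] (l : List α) (b : α) :
    b ≤ l.foldr max b := by
  induction l with
  | nil => exact le_rfl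
  | cons x xs ih => exact le_max_of_le_right ih

theorem IsPermOf.perm_s1 {l l' : List ℕ} {S : Finset ℕ} (h : IsPermOf l S) (h' : IsPermOf l' S) :
    l.Perm l' :=
  (List.perm_ext_iff_of_nodup h.1 h'.1).2 fun x => (h.2 x).trans (h'.2 x).symm

def flowStep (p : ℕ → Fin 3 → ℕ) (c : ℕ × ℕ × ℕ) (i : ℕ) : ℕ × ℕ × ℕ :=
  let c1 := c.1 + p i 0
  let c2 := max c.2.1 c1 + p i 1
  let c3 := max c.2.2 c2 + p i 2
  (c1, c2, c3)

section Flowshop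

variable (p : ℕ → Fin 3 → ℕ)

theorem flowComp_eq_foldl (l : List ℕ) : flowComp p l = l.foldl (flowStep p) (0, 0, 0) := rfl

theorem flowComp_append (l τ : List ℕ) :
    flowComp p (l ++ τ) = τ.foldl (flowStep p) (flowComp p l) := by
  rw [flowComp_eq_foldl, List.foldl_append, flowComp_eq_foldl]

theorem flowStep_mono (i : ℕ) : Monotone (flowStep p · i) := by
  rintro ⟨a, b, c⟩ ⟨a', b', c'⟩ ⟨ha, hb, hc⟩
  refine ⟨?_, ?_, ?_⟩ <;> dsimp [flowStep] at * <;> omega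

theorem flowComp_append_le_append {l l' : List ℕ} (h : flowComp p l ≤ flowComp p l')
    (τ : List ℕ) : flowComp p (l ++ τ) ≤ flowComp p (l' ++ τ) := by
  rw [flowComp_append, flowComp_append]
  exact List.foldl_monotone (flowStep_mono p) τ h

theorem flowComp_fst (l : List ℕ) : (flowComp p l).1 = (l.map (p · 0)).sum := by
  induction l using List.reverseRecOn with
  | nil => rfl
  | append_singleton l i ih => simp [flowComp_append, flowStep, ih]

theorem List.Perm.flowComp_fst_eq {l l' : List ℕ} (h : l.Perm l') :
    (flowComp p l).1 = (flowComp p l').1 := by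
  rw [flowComp_fst, flowComp_fst, (h.map _).sum_eq]

end Flowshop

section JobCompletion

variable (p : ℕ → Fin 3 → ℕ) {l : List ℕ} {i : ℕ}

theorem jobC_append_of_mem (hi : i ∈ l) (τ : List ℕ) : jobC p (l ++ τ) i = jobC p l i := by
  rw [jobC, jobC, List.takeWhile_append_of_mem_of_not hi (by simp)]

theorem jobC_append_of_not_mem (hi : i ∉ l) (τ : List ℕ) :
    jobC p (l ++ τ) i = C3 p (l ++ (τ.takeWhile (· != i) ++ [i])) := by
  rw [jobC, List.takeWhile_append_of_pos, List.append_assoc]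
  intro x hx
  simpa using ne_of_mem_of_not_mem hx hi

end JobCompletion

section MaxCost

variable (p : ℕ → Fin 3 → ℕ) (f : ℕ → ℕ → ℝ) {l : List ℕ}

theorem fmax_nonneg : 0 ≤ fmax p f l :=
  List.le_foldr_max_init _ _

theorem le_fmax {i : ℕ} (hi : i ∈ l) : f i (jobC p l i) ≤ fmax p f l :=
  List.le_max_of_le' 0 (List.mem_map_of_mem hi) le_rfl

theorem fmax_le {M : ℝ} (hM : 0 ≤ M) (h : ∀ i ∈ l, f i (jobC p l i) ≤ M) : fmax p f l ≤ M :=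
  List.foldr_max_le hM (by simpa using h)

theorem fmax_le_fmax_append (τ : List ℕ) : fmax p f l ≤ fmax p f (l ++ τ) :=
  fmax_le p f (fmax_nonneg p f) fun i hi => by
    simpa [jobC_append_of_mem p hi] using le_fmax p f (List.mem_append_left τ hi)

theorem fmax_append_le_fmax_append (hf : ∀ i, Monotone (f i)) {l' : List ℕ} (hsub : l' ⊆ l)
    (hC : flowComp p l ≤ flowComp p l') (hfl : fmax p f l ≤ fmax p f l') (τ : List ℕ) :
    fmax p f (l ++ τ) ≤ fmax p f (l' ++ τ) := by
  refine fmax_le p f (fmax_nonneg p f) fun i hi => ?_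
  by_cases hil : i ∈ l
  · calc f i (jobC p (l ++ τ) i) = f i (jobC p l i) := by rw [jobC_append_of_mem p hil]
      _ ≤ fmax p f l := le_fmax p f hil
      _ ≤ fmax p f l' := hfl
      _ ≤ fmax p f (l' ++ τ) := fmax_le_fmax_append p f τ
  · have hiτ : i ∈ τ := (List.mem_append.1 hi).resolve_left hil
    calc f i (jobC p (l ++ τ) i) = f i (C3 p (l ++ (τ.takeWhile (· != i) ++ [i]))) := by
          rw [jobC_append_of_not_mem p hil]
      _ ≤ f i (C3 p (l' ++ (τ.takeWhile (· != i) ++ [i]))) :=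
          hf i (flowComp_append_le_append p hC _).2.2
      _ = f i (jobC p (l' ++ τ) i) := by rw [jobC_append_of_not_mem p fun h => hil (hsub h)]
      _ ≤ fmax p f (l' ++ τ) := le_fmax p f (List.mem_append_right l' hiτ)

end MaxCost

theorem stmt_1_general (p : ℕ → Fin 3 → ℕ) (f : ℕ → ℕ → ℝ)
    (hfmono : ∀ i, Monotone (f i))
    (S' : Finset ℕ)
    (π π' σ : List ℕ) (hπ : IsPermOf π S') (hπ' : IsPermOf π' S')
    (h2 : C2 p π ≤ C2 p π') (h3 : C3 p π ≤ C3 p π')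
    (hf : fmax p f π ≤ fmax p f π') :
    C2 p (π ++ σ) ≤ C2 p (π' ++ σ) ∧ C3 p (π ++ σ) ≤ C3 p (π' ++ σ) ∧
      fmax p f (π ++ σ) ≤ fmax p f (π' ++ σ) := by
  have hperm : π.Perm π' := hπ.perm_s1 hπ'
  have hC : flowComp p π ≤ flowComp p π' := ⟨(hperm.flowComp_fst_eq p).le, h2, h3⟩
  have hCσ := flowComp_append_le_append p hC σ
  exact ⟨hCσ.2.1, hCσ.2.2, fmax_append_le_fmax_append p f hfmono hperm.symm.subset hC hf σ⟩

theorem stmt_1 (p : ℕ → Fin 3 → ℕ) (f : ℕ → ℕ → ℝ)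
    (hfmono : ∀ i, Monotone (f i)) (hfnn : ∀ i t, 0 ≤ f i t)
    (S S' : Finset ℕ) (hS' : S' ⊆ S)
    (π π' σ : List ℕ) (hπ : IsPermOf π S') (hπ' : IsPermOf π' S')
    (hσ : IsPermOf σ (S \ S'))
    (h2 : C2 p π ≤ C2 p π') (h3 : C3 p π ≤ C3 p π')
    (hf : fmax p f π ≤ fmax p f π') :
    C2 p (π ++ σ) ≤ C2 p (π' ++ σ) ∧ C3 p (π ++ σ) ≤ C3 p (π' ++ σ) ∧
      fmax p f (π ++ σ) ≤ fmax p f (π' ++ σ) :=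
  stmt_1_general p f hfmono S' π π' σ hπ hπ' h2 h3 hf
end

section
/- For any finite jobset S of cardinality t ≥ 1 on a single machine with release dates, the set of values {C(π) : π a permutation of S} has cardinality at most t · 2^{t−1}. -/
/-!
Cut a sequence at the last job `i` that starts exactly at its release date: from then on the
machine never idles, so the completion time is `r i + p i + ∑ j ∈ T, p j`, where `T` is the set
of jobs after `i`. Hence every completion time is determined by a job `i ∈ S` together with a
subset `T` of `S \ {i}`, and there are `t * 2 ^ (t - 1)` such pairs.
-/

/-- Completion time of a job sequence on a single machine with release
dates `r` and processing times `p`, started at time 0: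
`C([]) = 0` and `C(π ++ [i]) = max(C(π), r i) + p i`. -/
def relC (r p : ℕ → ℕ) (π : List ℕ) : ℕ :=
  π.foldl (fun c i => max c (r i) + p i) 0

/-- A job `q.1` started at its release date, followed without idle time by the jobs of `q.2`. -/
def blockCompletion (r p : ℕ → ℕ) (q : (_ : ℕ) × Finset ℕ) : ℕ :=
  r q.1 + p q.1 + ∑ j ∈ q.2, p j

lemma Finset.card_sigma_powerset_erase {α : Type*} [DecidableEq α] (S : Finset α) :
    (S.sigma fun i => (S.erase i).powerset).card = S.card * 2 ^ (S.card - 1) := by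
  rw [Finset.card_sigma, Finset.sum_congr rfl fun i hi => by
    rw [Finset.card_powerset, Finset.card_erase_of_mem hi], Finset.sum_const, smul_eq_mul]

lemma relC_append_singleton (r p : ℕ → ℕ) (π : List ℕ) (k : ℕ) :
    relC r p (π ++ [k]) = max (relC r p π) (r k) + p k := by
  simp [relC, List.foldl_append]

lemma exists_relC_eq_blockCompletion (r p : ℕ → ℕ) {π : List ℕ} (hπ : π.Nodup) (hne : π ≠ []) :
    ∃ i ∈ π, ∃ T ⊆ π.toFinset.erase i, relC r p π = blockCompletion r p ⟨i, T⟩ := by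
  induction π using List.reverseRecOn with
  | nil => exact absurd rfl hne
  | append_singleton π k ih =>
    obtain ⟨hk, hπ⟩ := List.nodup_cons.mp (List.nodup_append_comm.mp hπ)
    rw [relC_append_singleton]
    by_cases hidle : relC r p π ≤ r k
    · exact ⟨k, by simp, ∅, Finset.empty_subset _, by simp [blockCompletion, hidle]⟩
    · have hne : π ≠ [] := by rintro rfl; simp [relC] at hidle
      obtain ⟨i, hi, T, hT, hval⟩ := ih hπ hne
      have hki : k ≠ i := by rintro rfl; exact hk hi
      have hkT : k ∉ T := fun h => hk (List.mem_toFinset.mp (Finset.mem_of_mem_erase (hT h)))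
      refine ⟨i, by simp [hi], insert k T, Finset.insert_subset (by simp [hki]) ?_, ?_⟩
      · exact hT.trans (Finset.erase_subset_erase i (by simp))
      · rw [max_eq_left (le_of_not_ge hidle), hval, blockCompletion, blockCompletion,
          Finset.sum_insert hkT]
        ring

lemma relC_mem_image_blockCompletion (r p : ℕ → ℕ) {π : List ℕ} {S : Finset ℕ}
    (hπ : IsPermOf π S) (hS : S.Nonempty) :
    relC r p π ∈ (S.sigma fun i => (S.erase i).powerset).image (blockCompletion r p) := by
  obtain ⟨hnd, hmem⟩ := hπ
  have hS' : π.toFinset = S := Finset.ext fun x => by simpa using hmem x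
  have hne : π ≠ [] := by rintro rfl; simp [← hS'] at hS
  obtain ⟨i, hi, T, hT, hval⟩ := exists_relC_eq_blockCompletion r p hnd hne
  rw [hS'] at hT
  exact Finset.mem_image.mpr ⟨⟨i, T⟩, Finset.mem_sigma.mpr ⟨(hmem i).mp hi,
    Finset.mem_powerset.mpr hT⟩, hval.symm⟩

theorem stmt_7 (r p : ℕ → ℕ) (S : Finset ℕ) (t : ℕ) (ht : 1 ≤ t)
    (hcard : S.card = t) :
    {v : ℕ | ∃ π : List ℕ, IsPermOf π S ∧ relC r p π = v}.ncard ≤ t * 2 ^ (t - 1) := by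
  have hS : S.Nonempty := Finset.card_pos.mp (by omega)
  set B := (S.sigma fun i => (S.erase i).powerset).image (blockCompletion r p)
  have hsub : {v : ℕ | ∃ π : List ℕ, IsPermOf π S ∧ relC r p π = v} ⊆ B := by
    rintro v ⟨π, hπ, rfl⟩
    exact relC_mem_image_blockCompletion r p hπ hS
  calc _ ≤ (B : Set ℕ).ncard := Set.ncard_le_ncard hsub B.finite_toSet
    _ = B.card := Set.ncard_coe_finset B
    _ ≤ (S.sigma fun i => (S.erase i).powerset).card := Finset.card_image_le
    _ = t * 2 ^ (t - 1) := by rw [Finset.card_sigma_powerset_erase, hcard]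
end

section
/- Let T : ℕ → ℝ and p : ℕ → ℝ with T(n) ≥ 0 and p(n) ≥ 0 for all n, and p nondecreasing. If T(n) ≤ 2·Σ_{i=1}^{n−1} T(i) + p(n) for all n ≥ 2, then T(n) ≤ 3^{n−1} · (T(1) + p(n)) for all n ≥ 1. -/
/-!
Let `S n = T 1 + ⋯ + T n`. The recurrence gives `S (n + 1) ≤ 3 S n + p (n + 1)`, so, using that
`p` is nondecreasing, `S n ≤ 3^(n-1) T 1 + (3^(n-1) - 1)/2 · p n`. Feeding this back into the
recurrence bounds `T n` by `2 · 3^(n-2) T 1 + 3^(n-2) p n`, which is at most `3^(n-1) (T 1 + p n)`.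
-/

open Finset

section RecurrenceBound

variable {T p : ℕ → ℝ}

theorem sum_Icc_succ_le_three_mul_add
    (hrec : ∀ n, 2 ≤ n → T n ≤ 2 * (∑ i ∈ Icc 1 (n - 1), T i) + p n) (k : ℕ) :
    ∑ i ∈ Icc 1 (k + 2), T i ≤ 3 * ∑ i ∈ Icc 1 (k + 1), T i + p (k + 2) := by
  have hT := hrec (k + 2) (by omega)
  rw [show k + 2 - 1 = k + 1 by omega] at hT
  rw [sum_Icc_succ_top (show 1 ≤ k + 2 by omega)]
  linarith

theorem sum_Icc_le_three_pow_of_recurrence (hpmono : Monotone p)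
    (hrec : ∀ n, 2 ≤ n → T n ≤ 2 * (∑ i ∈ Icc 1 (n - 1), T i) + p n) (m : ℕ) :
    ∑ i ∈ Icc 1 (m + 1), T i ≤ 3 ^ m * T 1 + (3 ^ m - 1) / 2 * p (m + 1) := by
  induction m with
  | zero => simp
  | succ k ih =>
    have hcoeff : (0 : ℝ) ≤ (3 ^ k - 1) / 2 := by
      linarith [one_le_pow₀ (n := k) (by norm_num : (1 : ℝ) ≤ 3)]
    have hp_le : (3 ^ k - 1) / 2 * p (k + 1) ≤ (3 ^ k - 1) / 2 * p (k + 2) :=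
      mul_le_mul_of_nonneg_left (hpmono (by omega)) hcoeff
    calc ∑ i ∈ Icc 1 (k + 2), T i
        ≤ 3 * ∑ i ∈ Icc 1 (k + 1), T i + p (k + 2) := sum_Icc_succ_le_three_mul_add hrec k
      _ ≤ 3 * (3 ^ k * T 1 + (3 ^ k - 1) / 2 * p (k + 2)) + p (k + 2) := by linarith
      _ = 3 ^ (k + 1) * T 1 + (3 ^ (k + 1) - 1) / 2 * p (k + 1 + 1) := by ring

theorem le_three_pow_of_recurrence (hpmono : Monotone p)
    (hrec : ∀ n, 2 ≤ n → T n ≤ 2 * (∑ i ∈ Icc 1 (n - 1), T i) + p n) (m : ℕ) :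
    T (m + 2) ≤ 2 * 3 ^ m * T 1 + 3 ^ m * p (m + 2) := by
  have hsum := sum_Icc_le_three_pow_of_recurrence hpmono hrec m
  have hp_le : (3 ^ m - 1) * p (m + 1) ≤ (3 ^ m - 1) * p (m + 2) :=
    mul_le_mul_of_nonneg_left (hpmono (by omega))
      (by linarith [one_le_pow₀ (n := m) (by norm_num : (1 : ℝ) ≤ 3)])
  have hT := hrec (m + 2) (by omega)
  rw [show m + 2 - 1 = m + 1 by omega] at hT
  linarith

end RecurrenceBound

theorem stmt_9 (T p : ℕ → ℝ) (hT : ∀ n, 0 ≤ T n) (hp : ∀ n, 0 ≤ p n)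
    (hpmono : Monotone p)
    (hrec : ∀ n, 2 ≤ n → T n ≤ 2 * (∑ i ∈ Finset.Icc 1 (n - 1), T i) + p n) :
    ∀ n, 1 ≤ n → T n ≤ 3 ^ (n - 1) * (T 1 + p n) := by
  intro n hn
  obtain rfl | ⟨m, rfl⟩ : n = 1 ∨ ∃ m, n = m + 2 := by
    rcases n with _ | _ | m <;> simp_all
  · simpa using hp 1
  · have hpos : (0 : ℝ) ≤ 3 ^ m * (T 1 + 2 * p (m + 2)) :=
      mul_nonneg (by positivity) (by linarith [hT 1, hp (m + 2)])
    calc T (m + 2)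
        ≤ 2 * 3 ^ m * T 1 + 3 ^ m * p (m + 2) := le_three_pow_of_recurrence hpmono hrec m
      _ ≤ 3 ^ (m + 2 - 1) * (T 1 + p (m + 2)) := by
        rw [show m + 2 - 1 = m + 1 by omega, pow_succ]
        linarith
end

section
/- For every integer k ≥ 1, the equation x^{k+1} = 2·x^k + (5k − 1) has a unique real root c_k in the interval (2, ∞). Moreover, c_k converges to 2 as k → ∞; that is, for every ε > 0 there exists K such that c_k < 2 + ε for all k ≥ K. -/
/-!
Write the equation as `x ^ k * (x - 2) = 5k - 1`. On `[2, ∞)` the left side is continuous,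
strictly increasing and vanishes at `2`, which gives existence and uniqueness of the root
`c_k > 2`. Since `c_k ^ k ≥ 2 ^ k`, the root satisfies `c_k - 2 ≤ (5k - 1) / 2 ^ k`, and the
right side tends to `0`.
-/

open Filter Set

lemma pow_succ_eq_two_mul_pow_add_iff (k : ℕ) (x a : ℝ) :
    x ^ (k + 1) = 2 * x ^ k + a ↔ x ^ k * (x - 2) = a := by
  constructor <;> intro h <;> linarith [pow_succ x k]

lemma strictMonoOn_pow_mul_sub_two (k : ℕ) :
    StrictMonoOn (fun x : ℝ => x ^ k * (x - 2)) (Ici 2) := by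
  intro a (ha : 2 ≤ a) b _ hab
  have hpow : a ^ k ≤ b ^ k := pow_le_pow_left₀ (by linarith) hab.le k
  have hb : 0 < b ^ k := pow_pos (by linarith) k
  dsimp only
  nlinarith

lemma existsUnique_two_lt_pow_mul_sub_two_eq (k : ℕ) {a : ℝ} (ha : 0 < a) :
    ∃! x : ℝ, 2 < x ∧ x ^ k * (x - 2) = a := by
  set f : ℝ → ℝ := fun x => x ^ k * (x - 2)
  have hf_two : f 2 = 0 := by simp [f]
  have hf_top : a ≤ f (a + 2) := by
    have : 1 ≤ (a + 2) ^ k := one_le_pow₀ (by linarith)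
    simp only [f, add_sub_cancel_right]
    nlinarith
  obtain ⟨x, hx, hfx⟩ := intermediate_value_Icc (show (2 : ℝ) ≤ a + 2 by linarith)
    (by fun_prop : ContinuousOn f _) ⟨hf_two ▸ ha.le, hf_top⟩
  have hx2 : 2 < x := lt_of_le_of_ne hx.1 fun h => by rw [← h, hf_two] at hfx; linarith
  refine ⟨x, ⟨hx2, hfx⟩, fun y ⟨hy2, hfy⟩ => ?_⟩
  exact (strictMonoOn_pow_mul_sub_two k).injOn hy2.le hx2.le (hfy.trans hfx.symm)

lemma sub_two_le_div_two_pow {k : ℕ} {x a : ℝ} (hx : 2 ≤ x) (h : x ^ k * (x - 2) = a) :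
    x - 2 ≤ a / 2 ^ k := by
  have hpow : (2 : ℝ) ^ k ≤ x ^ k := pow_le_pow_left₀ (by norm_num) hx k
  rw [le_div_iff₀ (by positivity), ← h, mul_comm]
  exact mul_le_mul_of_nonneg_right hpow (by linarith)

lemma tendsto_five_mul_sub_one_div_two_pow :
    Tendsto (fun k : ℕ => (5 * (k : ℝ) - 1) / 2 ^ k) atTop (nhds 0) := by
  have hk : Tendsto (fun k : ℕ => (k : ℝ) ^ 1 / 2 ^ k) atTop (nhds 0) :=
    tendsto_pow_const_div_const_pow_of_one_lt 1 (by norm_num)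
  have hone : Tendsto (fun k : ℕ => (1 : ℝ) / 2 ^ k) atTop (nhds 0) := by
    simpa only [one_div_pow] using
      tendsto_pow_atTop_nhds_zero_of_lt_one (by norm_num : (0 : ℝ) ≤ 1 / 2) (by norm_num)
  convert (hk.const_mul 5).sub hone using 1
  · ext k
    ring
  · simp

theorem stmt_12 :
    (∀ k : ℕ, 1 ≤ k →
      ∃! c : ℝ, 2 < c ∧ c ^ (k + 1) = 2 * c ^ k + (5 * (k : ℝ) - 1)) ∧
    (∀ c : ℕ → ℝ,
      (∀ k : ℕ, 1 ≤ k →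
        2 < c k ∧ (c k) ^ (k + 1) = 2 * (c k) ^ k + (5 * (k : ℝ) - 1)) →
      ∀ ε : ℝ, 0 < ε → ∃ K : ℕ, ∀ k, K ≤ k → c k < 2 + ε) := by
  simp only [pow_succ_eq_two_mul_pow_add_iff]
  refine ⟨fun k hk => existsUnique_two_lt_pow_mul_sub_two_eq k ?_, fun c hc ε hε => ?_⟩
  · have : (1 : ℝ) ≤ k := by exact_mod_cast hk
    linarith
  obtain ⟨K, hK⟩ := eventually_atTop.mp
    (tendsto_five_mul_sub_one_div_two_pow.eventually (gt_mem_nhds hε))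
  refine ⟨max K 1, fun k hk => ?_⟩
  obtain ⟨hc2, hck⟩ := hc k (le_of_max_le_right hk)
  linarith [sub_two_le_div_two_pow hc2.le hck, hK k (le_of_max_le_left hk)]
end
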